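/- (Offset-independence of the normalization algorithm, finite-sample version.) Let G be a group which is also a metric space whose metric is right-invariant (dist(a·c, b·c) = dist(a, b) for all a, b, c ∈ G). Let g₁, …, g_N ∈ G and Γ ∈ G. If ĝ ∈ G minimizes the empirical Fréchet functional y ↦ ∑_{i=1}^N dist(y, g_i)² over G, then ĝ·Γ minimizes y ↦ ∑_{i=1}^N dist(y, g_i·Γ)² over G, and moreover (g_i·Γ)·(ĝ·Γ)⁻¹ = g_i·ĝ⁻¹ for every i. Hence the normalized samples produced from the right-translated data {g_i·Γ} coincide with those produced from the original data {g_i}: the output of canonical orientation normalization is independent of the arbitrary offset Γ. -/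

import Mathlib

/-! Right multiplication by `Γ` is an isometry of `G` onto itself, so it carries the Fréchet
functional of the samples `gᵢ` to that of the translated samples `gᵢ * Γ` and hence carries
minimizers to minimizers. -/

section EmpiricalFrechet

variable {ι α β : Type*} [Fintype ι] [PseudoMetricSpace α] [PseudoMetricSpace β]

def empiricalFrechet (x : ι → α) (y : α) : ℝ := ∑ i, dist y (x i) ^ 2

theorem Isometry.empiricalFrechet_comp {e : α → β} (he : Isometry e) (x : ι → α) (y : α) :
    empiricalFrechet (e ∘ x) (e y) = empiricalFrechet x y := by
  simp only [empiricalFrechet, Function.comp_apply, he.dist_eq]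

theorem IsometryEquiv.isMinOn_empiricalFrechet_comp (e : α ≃ᵢ β) {x : ι → α} {y : α}
    (hy : IsMinOn (empiricalFrechet x) Set.univ y) :
    IsMinOn (empiricalFrechet (e ∘ x)) Set.univ (e y) :=
  isMinOn_univ_iff.2 fun z => by
    rw [← e.apply_symm_apply z, e.isometry.empiricalFrechet_comp,
      e.isometry.empiricalFrechet_comp]
    exact isMinOn_univ_iff.1 hy _

end EmpiricalFrechet

/-- Offset-independence of canonical orientation normalization (finite-sample version):
for a right-invariant metric on a group `G`, if `ghat` minimizes the empirical Fréchet
functional of samples `g₁, …, g_N`, then `ghat * Γ` minimizes the empirical Fréchet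
functional of the right-translated samples `gᵢ * Γ`, and the normalized samples
coincide: `(gᵢ * Γ) * (ghat * Γ)⁻¹ = gᵢ * ghat⁻¹` for every `i`. -/
theorem empirical_normalization_offset_independent {G : Type*} [Group G] [MetricSpace G]
    (hinv : ∀ a b c : G, dist (a * c) (b * c) = dist a b)
    {N : ℕ} (g : Fin N → G) (Γ ghat : G)
    (hmin : ∀ y : G, (∑ i, dist ghat (g i) ^ 2) ≤ ∑ i, dist y (g i) ^ 2) :
    (∀ y : G, (∑ i, dist (ghat * Γ) (g i * Γ) ^ 2) ≤ ∑ i, dist y (g i * Γ) ^ 2) ∧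
      ∀ i : Fin N, (g i * Γ) * (ghat * Γ)⁻¹ = g i * ghat⁻¹ := by
  have : IsIsometricSMul Gᵐᵒᵖ G := ⟨fun c => Isometry.of_dist_eq fun a b => hinv a b c.unop⟩
  have hmin_translated := (IsometryEquiv.mulRight Γ).isMinOn_empiricalFrechet_comp
    (x := g) (isMinOn_univ_iff.2 hmin)
  refine ⟨isMinOn_univ_iff.1 hmin_translated, fun i => ?_⟩
  group
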